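/- arXiv:1307.3972 — 2 statements merged into one kernel-verified Lean document; each statement's English description precedes it below -/
import Mathlib

section
/- For every nonzero real number a and every (x,y) ∈ ℝ², the map L̃ of Theorem 7.1 satisfies b(L̃(x,y), ∂L̃/∂x(x,y)) = 0 and b(L̃(x,y), ∂L̃/∂y(x,y)) = 0 (as complex numbers); that is, L̃ is a horizontal map with respect to the Hopf fibration π : H⁵₂(−1) → CH²₁(−4). -/
open Complex

/-- The index-two Hermitian form
`b(z,w) = −conj z₁ · w₁ − conj z₂ · w₂ + conj z₃ · w₃` on `ℂ³`, over which the
pseudo-hyperbolic space `H⁵₂(−1) = {z : b(z,z) = −1}` and the Hopf fibration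
`π : H⁵₂(−1) → CH²₁(−4)` are defined. -/
noncomputable def bHyp (z w : ℂ × ℂ × ℂ) : ℂ :=
  -(starRingEnd ℂ z.1) * w.1 - (starRingEnd ℂ z.2.1) * w.2.1
    + (starRingEnd ℂ z.2.2) * w.2.2

/-- The horizontal lift `L̃ : ℝ² → ℂ³` of Theorem 7.1. -/
noncomputable def Lch (a x y : ℝ) : ℂ × ℂ × ℂ :=
  ((1 / Real.sqrt 3 : ℝ) : ℂ) •
    (((Real.sqrt 2 : ℝ) : ℂ) * Complex.exp (-(Complex.I * ((x + a ^ 2 * y : ℝ) : ℂ)) / (2 * (a : ℂ)))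
        * ((Real.cosh (Real.sqrt 3 * (x - a ^ 2 * y) / (2 * a)) : ℝ) : ℂ),
     Complex.exp (Complex.I * ((a * y + x / a : ℝ) : ℂ)),
     ((Real.sqrt 2 : ℝ) : ℂ) * Complex.exp (-(Complex.I * ((x + a ^ 2 * y : ℝ) : ℂ)) / (2 * (a : ℂ)))
        * ((Real.sinh (Real.sqrt 3 * (x - a ^ 2 * y) / (2 * a)) : ℝ) : ℂ))

/-!
Write `L̃ = c • (r e^{iθ} cosh u, e^{iφ}, r e^{iθ} sinh u)` with real `c, r` and real phases
`θ, φ` and rapidity `u`. Since `|e^{iθ}| = 1` and `cosh² u − sinh² u = 1`, the `u'`-terms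
cancel and `b(L̃, L̃') = −i c² (r² θ' + φ')`. For `L̃` one has `r² = 2`, `θ = −(x + a²y)/(2a)`
and `φ = ay + x/a`, so `2θ + φ` has vanishing partial derivatives.
-/

noncomputable def phasedHyperbola (c r θ φ u : ℝ) : ℂ × ℂ × ℂ :=
  (c : ℂ) • ((r : ℂ) * exp (θ * I) * (Real.cosh u : ℂ), exp (φ * I),
    (r : ℂ) * exp (θ * I) * (Real.sinh u : ℂ))

theorem conj_exp_ofReal_mul_I_mul_self (θ : ℝ) : starRingEnd ℂ (exp (θ * I)) * exp (θ * I) = 1 := by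
  rw [conj_mul', norm_exp_ofReal_mul_I, ofReal_one, one_pow]

section
variable {c r : ℝ} {θ φ u : ℝ → ℝ} {θ' φ' u' t : ℝ}

theorem hasDerivAt_phasedHyperbola
    (hθ : HasDerivAt θ θ' t) (hφ : HasDerivAt φ φ' t) (hu : HasDerivAt u u' t) :
    HasDerivAt (fun s => phasedHyperbola c r (θ s) (φ s) (u s))
      ((c : ℂ) • ((r : ℂ) * exp (θ t * I) * (θ' * I * Real.cosh (u t) + u' * Real.sinh (u t)),
        exp (φ t * I) * (φ' * I),
        (r : ℂ) * exp (θ t * I) * (θ' * I * Real.sinh (u t) + u' * Real.cosh (u t)))) t := by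
  have hE : HasDerivAt (fun s => (r : ℂ) * exp (θ s * I)) ((r : ℂ) * (exp (θ t * I) * (θ' * I))) t :=
    (hθ.ofReal_comp.mul_const I).cexp.const_mul _
  have hF : HasDerivAt (fun s => exp (φ s * I)) (exp (φ t * I) * (φ' * I)) t :=
    (hφ.ofReal_comp.mul_const I).cexp
  have hC := hu.cosh.ofReal_comp
  have hS := hu.sinh.ofReal_comp
  refine (((hE.mul hC).prodMk (hF.prodMk (hE.mul hS))).const_smul (c : ℂ)).congr_deriv ?_
  congr 1
  refine Prod.ext ?_ (Prod.ext ?_ ?_) <;> push_cast <;> ring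

theorem bHyp_phasedHyperbola_deriv
    (hθ : HasDerivAt θ θ' t) (hφ : HasDerivAt φ φ' t) (hu : HasDerivAt u u' t) :
    bHyp (phasedHyperbola c r (θ t) (φ t) (u t))
        (deriv (fun s => phasedHyperbola c r (θ s) (φ s) (u s)) t)
      = -(I * (c ^ 2 * (r ^ 2 * θ' + φ') : ℝ)) := by
  rw [(hasDerivAt_phasedHyperbola hθ hφ hu).deriv]
  have hθ1 := conj_exp_ofReal_mul_I_mul_self (θ t)
  have hφ1 := conj_exp_ofReal_mul_I_mul_self (φ t)
  have hcs : cosh (u t : ℂ) ^ 2 - sinh (u t : ℂ) ^ 2 = 1 := cosh_sq_sub_sinh_sq _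
  simp only [bHyp, phasedHyperbola, Prod.smul_mk, smul_eq_mul, map_mul, conj_ofReal]
  push_cast
  linear_combination (-(c : ℂ) ^ 2 * r ^ 2 * θ' * I * (cosh (u t : ℂ) ^ 2 - sinh (u t : ℂ) ^ 2)) * hθ1
    - (c : ℂ) ^ 2 * φ' * I * hφ1 - (c : ℂ) ^ 2 * r ^ 2 * θ' * I * hcs

theorem phasedHyperbola_horizontal
    (hθ : HasDerivAt θ θ' t) (hφ : HasDerivAt φ φ' t) (hu : HasDerivAt u u' t)
    (h : r ^ 2 * θ' + φ' = 0) :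
    bHyp (phasedHyperbola c r (θ t) (φ t) (u t))
      (deriv (fun s => phasedHyperbola c r (θ s) (φ s) (u s)) t) = 0 := by
  rw [bHyp_phasedHyperbola_deriv hθ hφ hu, h, mul_zero, ofReal_zero, mul_zero, neg_zero]

end

theorem Lch_eq_phasedHyperbola (a x y : ℝ) :
    Lch a x y = phasedHyperbola (1 / √3) √2 (-(x + a ^ 2 * y) / (2 * a)) (a * y + x / a)
      (√3 * (x - a ^ 2 * y) / (2 * a)) := by
  simp only [Lch, phasedHyperbola]
  congr 3 <;> push_cast <;> ring_nf

/-- Theorem 7.1: `L̃` is horizontal with respect to the Hopf fibration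
`π : H⁵₂(−1) → CH²₁(−4)`: each partial derivative is `b`-orthogonal over `ℂ`
to the position vector. -/
theorem Lch_horizontal (a : ℝ) (ha : a ≠ 0) :
    ∀ x y : ℝ,
      bHyp (Lch a x y) (deriv (fun t => Lch a t y) x) = 0 ∧
      bHyp (Lch a x y) (deriv (fun t => Lch a x t) y) = 0 := by
  intro x y
  have h2 : √2 ^ 2 = 2 := Real.sq_sqrt zero_le_two
  simp only [Lch_eq_phasedHyperbola]
  constructor
  · have hθ : HasDerivAt (fun t => -(t + a ^ 2 * y) / (2 * a)) (-1 / (2 * a)) x :=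
      ((hasDerivAt_id x).add_const _).neg.div_const _
    have hφ : HasDerivAt (fun t => a * y + t / a) (1 / a) x :=
      ((hasDerivAt_id x).div_const a).const_add _
    have hu : HasDerivAt (fun t => √3 * (t - a ^ 2 * y) / (2 * a)) (√3 * 1 / (2 * a)) x :=
      (((hasDerivAt_id x).sub_const _).const_mul _).div_const _
    refine (phasedHyperbola_horizontal hθ hφ hu ?_ :)
    rw [h2]; field_simp; ring
  · have hθ : HasDerivAt (fun t => -(x + a ^ 2 * t) / (2 * a)) (-(a ^ 2 * 1) / (2 * a)) y :=
      (((hasDerivAt_id y).const_mul _).const_add _).neg.div_const _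
    have hφ : HasDerivAt (fun t => a * t + x / a) (a * 1) y :=
      ((hasDerivAt_id y).const_mul a).add_const _
    have hu : HasDerivAt (fun t => √3 * (x - a ^ 2 * t) / (2 * a)) (√3 * -(a ^ 2 * 1) / (2 * a)) y :=
      ((((hasDerivAt_id y).const_mul _).const_sub _).const_mul _).div_const _
    refine (phasedHyperbola_horizontal hθ hφ hu ?_ :)
    rw [h2]; field_simp; ring
end

section
/- For every nonzero real number a, the map L̃ of Theorem 7.1 satisfies the PDE system ∂²L̃/∂x² = (i/a³)·∂L̃/∂y, ∂²L̃/∂x∂y = −L̃, and ∂²L̃/∂y² = i·a³·∂L̃/∂x at every point of ℝ². (The middle equation says that the mixed second derivative is purely in the position direction, which expresses minimality of the projected surface π∘L̃ in CH²₁(−4).) -/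
/-!
Each entry of `L̃` is built from `cosh`, `sinh` and exponentials, so `L̃` is a sum of three
exponential modes `e^{c x + d y} v`. On a single mode `∂ₓ` and `∂_y` act as multiplication by
`c` and `d`, so the system reduces to `c² = (i/a³) d`, `c d = −1`, `d² = i a³ c`; these hold
because the three frequencies `c` are `i/a` times the cube roots of unity and `d = −1/c`.
-/

open Complex

section ExpSum

variable {ι E : Type*} [Fintype ι] [NormedAddCommGroup E] [NormedSpace ℂ E]

noncomputable def expSum (c d : ι → ℂ) (v : ι → E) (x y : ℝ) : E :=
  ∑ k, exp (c k * x + d k * y) • v k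

variable (c d : ι → ℂ) (v : ι → E)

theorem hasDerivAt_expSum_fst (x y : ℝ) :
    HasDerivAt (fun t => expSum c d v t y) (expSum c d (fun k => c k • v k) x y) x := by
  refine HasDerivAt.fun_sum fun k _ => ?_
  have h := (((hasDerivAt_id x).ofReal_comp.const_mul (c k)).add_const (d k * y)).cexp
  simpa [smul_smul, mul_comm] using h.smul_const (v k)

theorem hasDerivAt_expSum_snd (x y : ℝ) :
    HasDerivAt (fun t => expSum c d v x t) (expSum c d (fun k => d k • v k) x y) y := by
  refine HasDerivAt.fun_sum fun k _ => ?_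
  have h := (((hasDerivAt_id y).ofReal_comp.const_mul (d k)).const_add (c k * x)).cexp
  simpa [smul_smul, mul_comm] using h.smul_const (v k)

theorem deriv_expSum_fst (y : ℝ) :
    deriv (fun t => expSum c d v t y) = fun x => expSum c d (fun k => c k • v k) x y :=
  funext fun x => (hasDerivAt_expSum_fst c d v x y).deriv

theorem deriv_expSum_snd (x : ℝ) :
    deriv (fun t => expSum c d v x t) = fun y => expSum c d (fun k => d k • v k) x y :=
  funext fun y => (hasDerivAt_expSum_snd c d v x y).deriv

theorem smul_expSum (r : ℂ) (x y : ℝ) :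
    r • expSum c d v x y = expSum c d (fun k => r • v k) x y := by
  simp only [expSum, Finset.smul_sum, smul_comm r]

variable {c d}

theorem deriv_fst_fst_expSum {α : ℂ} (h : ∀ k, c k * c k = α * d k) (x y : ℝ) :
    deriv (fun s => deriv (fun t => expSum c d v t y) s) x
      = α • deriv (fun t => expSum c d v x t) y := by
  simp only [deriv_expSum_fst, deriv_expSum_snd, smul_expSum, smul_smul, h]

theorem deriv_fst_snd_expSum {γ : ℂ} (h : ∀ k, c k * d k = γ) (x y : ℝ) :
    deriv (fun s => deriv (fun t => expSum c d v s t) y) x = γ • expSum c d v x y := by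
  simp only [deriv_expSum_fst, deriv_expSum_snd, smul_expSum, smul_smul, h]

theorem deriv_snd_snd_expSum {β : ℂ} (h : ∀ k, d k * d k = β * c k) (x y : ℝ) :
    deriv (fun s => deriv (fun t => expSum c d v x t) s) y
      = β • deriv (fun t => expSum c d v t y) x := by
  simp only [deriv_expSum_fst, deriv_expSum_snd, smul_expSum, smul_smul, h]

end ExpSum

theorem mul_self_eq_of_mul_eq_neg_one {a c d : ℂ} (ha : a ≠ 0) (hcd : c * d = -1)
    (hc : (a * c) ^ 3 = -I) :
    c * c = I / a ^ 3 * d ∧ d * d = I * a ^ 3 * c := by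
  have hc0 : c ≠ 0 := left_ne_zero_of_mul (by rw [hcd]; norm_num)
  constructor
  · field_simp
    refine mul_right_cancel₀ hc0 ?_
    linear_combination hc - I * hcd
  · refine mul_right_cancel₀ (pow_ne_zero 2 hc0) ?_
    linear_combination (c * d - 1) * hcd - I * hc + I_sq

theorem ofReal_sqrt_three_sq : ((√3 : ℝ) : ℂ) ^ 2 = 3 := by
  rw [← ofReal_pow, Real.sq_sqrt (by norm_num)]; norm_num

noncomputable def lchFreqX (a : ℝ) : Fin 3 → ℂ :=
  ![(√3 - I) / (2 * a), -(√3 + I) / (2 * a), I / a]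

noncomputable def lchFreqY (a : ℝ) : Fin 3 → ℂ :=
  ![-(√3 + I) * a / 2, (√3 - I) * a / 2, I * a]

noncomputable def lchAmp : Fin 3 → ℂ × ℂ × ℂ :=
  ![(√2 / (2 * √3), 0, √2 / (2 * √3)),
    (√2 / (2 * √3), 0, -(√2 / (2 * √3))),
    (0, 1 / √3, 0)]

theorem Lch_eq_expSum {a : ℝ} (ha : a ≠ 0) (x y : ℝ) :
    Lch a x y = expSum (lchFreqX a) (lchFreqY a) lchAmp x y := by
  have ha' : (a : ℂ) ≠ 0 := ofReal_ne_zero.2 ha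
  rw [Lch]
  set u : ℂ := -(I * ((x + a ^ 2 * y : ℝ) : ℂ)) / (2 * a)
  set θ : ℝ := √3 * (x - a ^ 2 * y) / (2 * a)
  have h₀ : lchFreqX a 0 * x + lchFreqY a 0 * y = u + θ := by
    simp only [lchFreqX, lchFreqY, u, θ]; push_cast; field_simp; ring
  have h₁ : lchFreqX a 1 * x + lchFreqY a 1 * y = u - θ := by
    simp only [lchFreqX, lchFreqY, u, θ]; push_cast; field_simp; ring
  have h₂ : lchFreqX a 2 * x + lchFreqY a 2 * y = I * ((a * y + x / a : ℝ) : ℂ) := by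
    simp only [lchFreqX, lchFreqY]; push_cast; field_simp; ring
  rw [expSum, Fin.sum_univ_three, h₀, h₁, h₂]
  simp only [lchAmp, ofReal_cosh, ofReal_sinh, cosh, sinh, exp_add, exp_sub, exp_neg,
    Matrix.cons_val_zero, Matrix.cons_val_one, Matrix.cons_val_two, Matrix.head_cons,
    Matrix.tail_cons, Prod.smul_mk, smul_eq_mul, Prod.mk_add_mk, Prod.mk.injEq]
  push_cast
  refine ⟨by ring, by ring, by ring⟩

theorem lchFreqX_mul_lchFreqY {a : ℝ} (ha : a ≠ 0) (k : Fin 3) :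
    lchFreqX a k * lchFreqY a k = -1 := by
  have ha' : (a : ℂ) ≠ 0 := ofReal_ne_zero.2 ha
  fin_cases k <;>
    simp only [lchFreqX, lchFreqY, Fin.zero_eta, Fin.mk_one, Fin.reduceFinMk, Fin.isValue,
      Matrix.cons_val, Matrix.cons_val_zero, Matrix.cons_val_one] <;>
    field_simp
  · linear_combination -ofReal_sqrt_three_sq + I_sq
  · linear_combination -ofReal_sqrt_three_sq + I_sq
  · exact I_sq

theorem lchFreqX_cube {a : ℝ} (ha : a ≠ 0) (k : Fin 3) :
    ((a : ℂ) * lchFreqX a k) ^ 3 = -I := by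
  have ha' : (a : ℂ) ≠ 0 := ofReal_ne_zero.2 ha
  fin_cases k <;>
    simp only [lchFreqX, Fin.zero_eta, Fin.mk_one, Fin.reduceFinMk, Fin.isValue,
      Matrix.cons_val, Matrix.cons_val_zero, Matrix.cons_val_one] <;>
    field_simp
  · linear_combination (√3 - 3 * I) * ofReal_sqrt_three_sq + (3 * √3 - I) * I_sq
  · linear_combination -(√3 + 3 * I) * ofReal_sqrt_three_sq - (3 * √3 + I) * I_sq
  · exact I_sq

/-- Theorem 7.1 (PDE system): `L̃_xx = (i/a³) L̃_y`, `L̃_xy = −L̃`, and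
`L̃_yy = i a³ L̃_x`; the middle equation expresses minimality of `π ∘ L̃`
in `CH²₁(−4)`. -/
theorem Lch_pde_system (a : ℝ) (ha : a ≠ 0) :
    ∀ x y : ℝ,
      deriv (fun s => deriv (fun t => Lch a t y) s) x
        = (Complex.I / (a : ℂ) ^ 3) • deriv (fun t => Lch a x t) y ∧
      deriv (fun s => deriv (fun t => Lch a s t) y) x = -Lch a x y ∧
      deriv (fun s => deriv (fun t => Lch a x t) s) y
        = (Complex.I * (a : ℂ) ^ 3) • deriv (fun t => Lch a t y) x := by
  intro x y
  have hcd := lchFreqX_mul_lchFreqY ha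
  have hmode k := mul_self_eq_of_mul_eq_neg_one (ofReal_ne_zero.2 ha) (hcd k) (lchFreqX_cube ha k)
  simp only [Lch_eq_expSum ha]
  refine ⟨deriv_fst_fst_expSum _ (fun k => (hmode k).1) x y, ?_,
    deriv_snd_snd_expSum _ (fun k => (hmode k).2) x y⟩
  rw [deriv_fst_snd_expSum _ hcd, neg_one_smul]
end
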